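/- A homogeneous element of degree m of the free associative algebra 𝒜 on X₁,…,Xₙ over a field of characteristic zero is regular (a linear combination of m-th powers of linear forms in the Xᵢ) if and only if, writing it as Σ λ_{i₁…iₘ} X_{i₁}⋯X_{iₘ}, the coefficient function is symmetric: λ_{i_{σ(1)}…i_{σ(m)}} = λ_{i₁…iₘ} for all permutations σ ∈ Σₘ. -/

import Mathlib

open scoped BigOperators

noncomputable section

/-- The word `X₁^{α₁} ⋯ Xₙ^{αₙ}` as a list of generator indices. -/
def word (n : ℕ) (α : Fin n → ℕ) : List (Fin n) :=
  (List.finRange n).flatMap fun i => List.replicate (α i) i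

/-- The symmetrization `symz(X^(α)) = (1/m!) ∑_{σ ∈ Σₘ} X'_{σ(1)} ⋯ X'_{σ(m)}`
of the monomial `X^(α)` in the free associative algebra. -/
def symz (K : Type) [Field K] (n : ℕ) (α : Fin n → ℕ) : FreeAlgebra K (Fin n) :=
  ((Nat.factorial (word n α).length : K))⁻¹ •
    ∑ σ : Equiv.Perm (Fin (word n α).length),
      (List.ofFn fun j => FreeAlgebra.ι K ((word n α).get (σ j))).prod

/-- Regular homogeneous polynomials of degree `m`: the span of `m`-th powers of
linear forms in the generators. -/
def RegHom (K : Type) [Field K] (n m : ℕ) : Submodule K (FreeAlgebra K (Fin n)) :=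
  Submodule.span K {x | ∃ c : Fin n → K, x = (∑ i, c i • FreeAlgebra.ι K i) ^ m}

/-- Regular polynomials: the span of all powers of linear forms in the generators. -/
def Reg (K : Type) [Field K] (n : ℕ) : Submodule K (FreeAlgebra K (Fin n)) :=
  Submodule.span K {x | ∃ (m : ℕ) (c : Fin n → K), x = (∑ i, c i • FreeAlgebra.ι K i) ^ m}

/-- The symmetrization map `Φ` from commutative polynomials to the free algebra,
sending `x^(α)` to `symz(X^(α))` and extended linearly. -/
def Phi (K : Type) [Field K] (n : ℕ) (p : MvPolynomial (Fin n) K) : FreeAlgebra K (Fin n) :=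
  ∑ d ∈ p.support, p.coeff d • symz K n (fun i => d i)

/-! The coefficient of the word `X_{u₁} ⋯ X_{uₘ}` in `(∑ cᵢ Xᵢ) ^ m` is `∏ c_{u_j}`, which does
not change when `u` is permuted; as extracting a coefficient is linear, every element of `RegHom`
has symmetric coefficients. Conversely, symmetric coefficients `λ` make the element equal to
`(1/m!) ∑_w λ_w ∑_σ X_{w(σ 1)} ⋯ X_{w(σ m)}`, and each full symmetrization is a combination of
`m`-th powers by polarization: in `∑_{S ⊆ [m]} (-1)^{m-|S|} (∑_{j ∈ S} X_{w_j}) ^ m`,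
inclusion–exclusion keeps exactly the words using every position `j` once. -/

open Finset Fintype

theorem pow_sum_eq_sum_piFinset {ι A : Type*} [Semiring A] [DecidableEq ι] (s : Finset ι)
    (x : ι → A) (k : ℕ) :
    (∑ i ∈ s, x i) ^ k = ∑ f ∈ piFinset fun _ : Fin k => s, (List.ofFn fun j => x (f j)).prod := by
  simpa using (MultilinearMap.mkPiAlgebraFin ℕ k A).map_sum_finset (fun _ => x) fun _ => s

theorem pow_sum_smul_eq_sum {ι R A : Type*} [Fintype ι] [CommSemiring R]
    [Semiring A] [Algebra R A] (c : ι → R) (x : ι → A) (k : ℕ) :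
    (∑ i, c i • x i) ^ k = ∑ f : Fin k → ι, (∏ j, c (f j)) • (List.ofFn fun j => x (f j)).prod := by
  simpa [MultilinearMap.map_smul_univ] using
    (MultilinearMap.mkPiAlgebraFin R k A).map_sum fun _ i => c i • x i

theorem Finset.sum_ite_subset_neg_one_pow_card_compl {ι : Type*} [Fintype ι] [DecidableEq ι]
    (R : Finset ι) :
    ∑ S : Finset ι, (if R ⊆ S then (-1 : ℤ) ^ #Sᶜ else 0) = if R = univ then 1 else 0 := by
  rw [← Equiv.sum_comp (compl_involutive.toPerm _)]
  simp only [Function.Involutive.coe_toPerm, compl_compl, subset_compl_comm (s := R),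
    ← sum_filter, filter_subset_univ, sum_powerset_neg_one_pow_card, compl_eq_empty_iff]

theorem Finset.sum_ite_forall_mem_neg_one_pow_card_compl {k : ℕ} {ι : Type*} [Fintype ι]
    [DecidableEq ι] (f : Fin k → ι) :
    ∑ S : Finset ι, (if ∀ j, f j ∈ S then (-1 : ℤ) ^ #Sᶜ else 0) =
      if Function.Surjective f then 1 else 0 := by
  have hsub (S : Finset ι) : (∀ j, f j ∈ S) ↔ univ.image f ⊆ S := by simp [image_subset_iff]
  have huniv : univ.image f = univ ↔ Function.Surjective f := by
    simp [eq_univ_iff_forall, Function.Surjective]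
  simp only [hsub, sum_ite_subset_neg_one_pow_card_compl, huniv]

theorem sum_neg_one_pow_card_compl_smul_pow_sum {ι A : Type*} [Fintype ι] [DecidableEq ι]
    [Ring A] (x : ι → A) (k : ℕ) :
    ∑ S : Finset ι, (-1 : ℤ) ^ #Sᶜ • (∑ i ∈ S, x i) ^ k =
      ∑ f : Fin k → ι, if Function.Surjective f then (List.ofFn fun j => x (f j)).prod else 0 := by
  calc ∑ S : Finset ι, (-1 : ℤ) ^ #Sᶜ • (∑ i ∈ S, x i) ^ k
      = ∑ S : Finset ι, ∑ f : Fin k → ι,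
          (if ∀ j, f j ∈ S then (-1 : ℤ) ^ #Sᶜ else 0) • (List.ofFn fun j => x (f j)).prod := by
        simp only [pow_sum_eq_sum_piFinset, smul_sum, ite_smul, zero_smul, ← sum_filter,
          ← mem_piFinset (t := fun _ : Fin k => _), filter_mem_eq_inter, univ_inter]
    _ = ∑ f : Fin k → ι,
          (if Function.Surjective f then 1 else 0 : ℤ) • (List.ofFn fun j => x (f j)).prod := by
        rw [sum_comm]
        simp only [← sum_smul, sum_ite_forall_mem_neg_one_pow_card_compl]
    _ = _ := by simp only [ite_smul, one_smul, zero_smul]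

theorem sum_perm_eq_sum_ite_surjective {α M : Type*} [Fintype α] [DecidableEq α]
    [AddCommMonoid M] (g : (α → α) → M) :
    ∑ σ : Equiv.Perm α, g σ = ∑ f : α → α, if Function.Surjective f then g f else 0 := by
  rw [← sum_filter]
  refine sum_bij (fun σ _ => σ) (fun σ _ => by simpa using σ.surjective)
    (fun _ _ _ _ h => Equiv.coe_fn_injective h) (fun f hf => ?_) fun _ _ => rfl
  exact ⟨Equiv.ofBijective f (Finite.surjective_iff_bijective.mp (mem_filter.mp hf).2),
    mem_univ _, rfl⟩

theorem FreeAlgebra.basisFreeMonoid_ofList {R X : Type*} [CommSemiring R] (l : List X) :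
    basisFreeMonoid R X (FreeMonoid.ofList l) = (l.map (ι R)).prod := by
  simp [basisFreeMonoid, equivMonoidAlgebraFreeMonoid, FreeMonoid.lift_ofList]

theorem FreeAlgebra.repr_sum_smul_prod_ofFn {R X : Type*} [CommSemiring R] [Fintype X] {m : ℕ}
    (a : (Fin m → X) → R) (u : Fin m → X) :
    (basisFreeMonoid R X).repr (∑ w : Fin m → X, a w • (List.ofFn fun j => ι R (w j)).prod)
      (FreeMonoid.ofList (List.ofFn u)) = a u := by
  classical
  have hword (w : Fin m → X) : (List.ofFn fun j => ι R (w j)).prod =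
      basisFreeMonoid R X (FreeMonoid.ofList (List.ofFn w)) := by
    rw [basisFreeMonoid_ofList, List.map_ofFn]; rfl
  have hinj : Function.Injective fun w : Fin m → X => FreeMonoid.ofList (List.ofFn w) :=
    FreeMonoid.ofList.injective.comp List.ofFn_injective
  simp only [hword, map_sum, map_smul, Module.Basis.repr_self, Finsupp.finsetSum_apply,
    Finsupp.smul_apply, Finsupp.single_apply, hinj.eq_iff, smul_eq_mul, mul_ite, mul_one, mul_zero,
    Fintype.sum_ite_eq']

theorem repr_comp_perm_of_mem_regHom {K : Type} [Field K] {n m : ℕ} {y : FreeAlgebra K (Fin n)}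
    (hy : y ∈ RegHom K n m) (u : Fin m → Fin n) (σ : Equiv.Perm (Fin m)) :
    (FreeAlgebra.basisFreeMonoid K (Fin n)).repr y (FreeMonoid.ofList (List.ofFn (u ∘ σ))) =
      (FreeAlgebra.basisFreeMonoid K (Fin n)).repr y (FreeMonoid.ofList (List.ofFn u)) := by
  induction hy using Submodule.span_induction with
  | mem x hx =>
    obtain ⟨c, rfl⟩ := hx
    simp only [pow_sum_smul_eq_sum, FreeAlgebra.repr_sum_smul_prod_ofFn, Function.comp_apply]
    exact Equiv.prod_comp σ fun j => c (u j)
  | zero => simp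
  | add x y _ _ hx hy => simp only [map_add, Finsupp.add_apply, hx, hy]
  | smul a x _ hx => simp only [map_smul, Finsupp.smul_apply, hx]

theorem pow_sum_ι_mem_regHom {K : Type} [Field K] {n : ℕ} (m : ℕ) {ι : Type*} (s : Finset ι)
    (w : ι → Fin n) : (∑ j ∈ s, FreeAlgebra.ι K (w j)) ^ m ∈ RegHom K n m := by
  classical
  refine Submodule.subset_span ⟨fun i => (#{j ∈ s | w j = i} : K), ?_⟩
  rw [← sum_fiberwise s w]
  refine congrArg (· ^ m) (sum_congr rfl fun i _ => ?_)
  rw [Nat.cast_smul_eq_nsmul, ← sum_const]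
  exact sum_congr rfl fun j hj => by rw [(mem_filter.mp hj).2]

theorem sum_perm_prod_ι_mem_regHom {K : Type} [Field K] {n m : ℕ} (w : Fin m → Fin n) :
    ∑ σ : Equiv.Perm (Fin m), (List.ofFn fun j => FreeAlgebra.ι K (w (σ j))).prod ∈
      RegHom K n m := by
  rw [sum_perm_eq_sum_ite_surjective fun f => (List.ofFn fun j => FreeAlgebra.ι K (w (f j))).prod,
    ← sum_neg_one_pow_card_compl_smul_pow_sum (fun j => FreeAlgebra.ι K (w j)) m]
  exact Submodule.sum_mem _ fun S _ => zsmul_mem (pow_sum_ι_mem_regHom m S w) _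

theorem sum_smul_sum_perm_eq_factorial_smul {ι R M : Type*} [Fintype ι] [Semiring R]
    [AddCommMonoid M] [Module R M] {m : ℕ} (lam : (Fin m → ι) → R)
    (hlam : ∀ (w : Fin m → ι) (σ : Equiv.Perm (Fin m)), lam (w ∘ σ) = lam w)
    (F : (Fin m → ι) → M) :
    ∑ w, lam w • ∑ σ : Equiv.Perm (Fin m), F (w ∘ σ) = m.factorial • ∑ w, lam w • F w := by
  have hreindex (σ : Equiv.Perm (Fin m)) : ∑ w, lam w • F (w ∘ σ) = ∑ w, lam w • F w := by
    refine Fintype.sum_bijective (· ∘ σ) σ.bijective.comp_right _ _ fun w => ?_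
    rw [hlam]
  calc ∑ w, lam w • ∑ σ : Equiv.Perm (Fin m), F (w ∘ σ)
      = ∑ σ : Equiv.Perm (Fin m), ∑ w, lam w • F (w ∘ σ) := by simp only [smul_sum]; exact sum_comm
    _ = m.factorial • ∑ w, lam w • F w := by
      rw [sum_congr rfl fun σ _ => hreindex σ, sum_const, card_univ, Fintype.card_perm,
        Fintype.card_fin]

theorem regular_iff_symmetric_coefficients (K : Type) [Field K] [CharZero K]
    (n m : ℕ) (lam : (Fin m → Fin n) → K) :
    (∑ w : Fin m → Fin n, lam w • (List.ofFn fun j => FreeAlgebra.ι K (w j)).prod)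
        ∈ RegHom K n m ↔
      ∀ (w : Fin m → Fin n) (σ : Equiv.Perm (Fin m)), lam (w ∘ σ) = lam w := by
  constructor
  · intro hmem w σ
    have h := repr_comp_perm_of_mem_regHom hmem w σ
    rwa [FreeAlgebra.repr_sum_smul_prod_ofFn, FreeAlgebra.repr_sum_smul_prod_ofFn] at h
  · intro hlam
    have hfac : (m.factorial : K) ≠ 0 := Nat.cast_ne_zero.mpr m.factorial_ne_zero
    rw [← inv_smul_smul₀ hfac (∑ w, _), Nat.cast_smul_eq_nsmul,
      ← sum_smul_sum_perm_eq_factorial_smul lam hlam]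
    exact Submodule.smul_mem _ _ <| Submodule.sum_mem _ fun w _ =>
      Submodule.smul_mem _ _ (sum_perm_prod_ι_mem_regHom w)

end
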